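/- arXiv:0711.1901 — 2 statements merged into one kernel-verified Lean document; each statement's English description precedes it below -/
import Mathlib

section
/- Let Q be a nonzero real binary quartic whose four linear factors over ℂ are pairwise non-proportional (equivalently, Δ(Q) ≠ 0). Then Δ(Q) > 0 if and only if the number of pairwise non-proportional real linear forms dividing Q is 0 or 4, and Δ(Q) < 0 if and only if that number is exactly 2 (two simple real linear factors and one pair of complex-conjugate linear factors). -/
/-!
A real linear form `pX + qY` divides `Q` exactly when `Q(q, -p) = 0`, so `N` counts the real zeros
of `Q` on the projective line. A shear `(x, y) ↦ (x, tx + y)` preserves `I` and `J`, and for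
suitable `t` it moves every zero into the affine chart, where `N` becomes the number of real roots
of a quartic polynomial `a x⁴ + ⋯ + e` with `a ≠ 0`. Over `ℂ` its roots `s₁, …, s₄` satisfy
`Δ = 27 a⁶ V²` with `V = ∏_{i<j} (sᵢ - sⱼ)`. The roots are all real, or one conjugate pair and two
real roots, or two conjugate pairs; complex conjugation permutes them by zero, one or two
transpositions, so it fixes `V` in the first and last cases (`Δ > 0`) and negates it in the middle
one (`Δ < 0`).
-/

open MvPolynomial

/-- The real binary quartic `aX⁴ + bX³Y + cX²Y² + dXY³ + eY⁴`. -/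
noncomputable def binQuartic (a b c d e : ℝ) : MvPolynomial (Fin 2) ℝ :=
  C a * X 0 ^ 4 + C b * X 0 ^ 3 * X 1 + C c * X 0 ^ 2 * X 1 ^ 2 +
    C d * X 0 * X 1 ^ 3 + C e * X 1 ^ 4

/-- The real linear form `pX + qY`. -/
noncomputable def linForm (p q : ℝ) : MvPolynomial (Fin 2) ℝ :=
  C p * X 0 + C q * X 1

/-- The fundamental invariant `I = 12ae − 3bd + c²` of a real binary quartic. -/
def Iinv (a b c d e : ℝ) : ℝ := 12 * a * e - 3 * b * d + c ^ 2

/-- The fundamental invariant `J = 72aec − 27ad² − 27b²e + 9bcd − 2c³`. -/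
def Jinv (a b c d e : ℝ) : ℝ :=
  72 * a * e * c - 27 * a * d ^ 2 - 27 * b ^ 2 * e + 9 * b * c * d - 2 * c ^ 3

def quarticForm {R : Type*} [CommSemiring R] (a b c d e x y : R) : R :=
  a * x ^ 4 + b * x ^ 3 * y + c * x ^ 2 * y ^ 2 + d * x * y ^ 3 + e * y ^ 4

def quarticDisc (a b c d e : ℝ) : ℝ := 4 * Iinv a b c d e ^ 3 - Jinv a b c d e ^ 2

-- Modulo `L = pX + qY` we have `(p² + q²)X ≡ qM` and `(p² + q²)Y ≡ -pM` with `M = qX - pY`,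
-- and substituting either side into the homogeneous `Q` gives the two terms of the difference.
lemma linForm_dvd_sub (a b c d e p q : ℝ) :
    linForm p q ∣ C ((p ^ 2 + q ^ 2) ^ 4) * binQuartic a b c d e -
      C (quarticForm a b c d e q (-p)) * (C q * X 0 - C p * X 1) ^ 4 := by
  set M : MvPolynomial (Fin 2) ℝ := C q * X 0 - C p * X 1
  set f : Fin 2 → MvPolynomial (Fin 2) ℝ := fun i => C (p ^ 2 + q ^ 2) * X i
  set g : Fin 2 → MvPolynomial (Fin 2) ℝ := ![C q * M, -(C p * M)]
  have hf : aeval f (binQuartic a b c d e) = C ((p ^ 2 + q ^ 2) ^ 4) * binQuartic a b c d e := by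
    simp only [binQuartic, f, map_add, map_mul, map_pow, aeval_C, aeval_X, algebraMap_eq]
    ring
  have hg : aeval g (binQuartic a b c d e) = C (quarticForm a b c d e q (-p)) * M ^ 4 := by
    simp only [binQuartic, quarticForm, g, map_add, map_mul, map_pow, map_neg, aeval_C, aeval_X,
      algebraMap_eq, Matrix.cons_val_zero, Matrix.cons_val_one]
    ring
  set π := Ideal.Quotient.mkₐ ℝ (Ideal.span {linForm p q})
  have hfg : (fun i => π (f i)) = fun i => π (g i) := by
    ext i
    rw [← sub_eq_zero, ← map_sub, Ideal.Quotient.mkₐ_eq_mk, Ideal.Quotient.eq_zero_iff_mem,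
      Ideal.mem_span_singleton]
    fin_cases i
    · exact ⟨C p, by simp [f, g, M, linForm]; ring⟩
    · exact ⟨C q, by simp [f, g, M, linForm]; ring⟩
  rw [← hf, ← hg, ← Ideal.mem_span_singleton, ← Ideal.Quotient.eq_zero_iff_mem,
    ← Ideal.Quotient.mkₐ_eq_mk ℝ, map_sub, sub_eq_zero, ← AlgHom.comp_apply, ← AlgHom.comp_apply,
    comp_aeval, comp_aeval, hfg]

lemma linForm_dvd_binQuartic_iff {a b c d e p q : ℝ} (hpq : (p, q) ≠ 0) :
    linForm p q ∣ binQuartic a b c d e ↔ quarticForm a b c d e q (-p) = 0 := by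
  constructor
  · rintro ⟨K, hK⟩
    have h := congrArg (eval ![q, -p]) hK
    simp only [binQuartic, linForm, quarticForm, map_add, map_mul, map_pow, eval_C, eval_X,
      Matrix.cons_val_zero, Matrix.cons_val_one] at h ⊢
    linear_combination h
  · intro h
    have hw : p ^ 2 + q ^ 2 ≠ 0 := by
      contrapose! hpq
      simp only [Prod.mk_eq_zero]
      constructor <;> nlinarith
    have hunit : IsUnit (C ((p ^ 2 + q ^ 2) ^ 4) : MvPolynomial (Fin 2) ℝ) :=
      (isUnit_iff_ne_zero.mpr (pow_ne_zero 4 hw)).map C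
    have := linForm_dvd_sub a b c d e p q
    rwa [h, map_zero, zero_mul, sub_zero, hunit.dvd_mul_left] at this

lemma quarticForm_mul_mul {R : Type*} [CommSemiring R] (a b c d e s x y : R) :
    quarticForm a b c d e (s * x) (s * y) = s ^ 4 * quarticForm a b c d e x y := by
  unfold quarticForm
  ring

lemma shearChart_ne_zero (t x : ℝ) : ((-(t * x + 1), x) : ℝ × ℝ) ≠ 0 := fun h => by
  obtain ⟨h, rfl⟩ := Prod.mk_eq_zero.mp h
  simp at h

noncomputable def shearChart (t x : ℝ) : Projectivization ℝ (ℝ × ℝ) :=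
  Projectivization.mk ℝ _ (shearChart_ne_zero t x)

lemma shearChart_injective (t : ℝ) : (shearChart t).Injective := fun x x' h => by
  obtain ⟨u, hu⟩ := (Projectivization.mk_eq_mk_iff' ℝ _ _ _ _).mp h
  simp only [Prod.smul_mk, smul_eq_mul, Prod.mk.injEq] at hu
  obtain rfl : u = 1 := by linear_combination -hu.1 - t * hu.2
  simpa using hu.2.symm

-- `shearChart t` misses only `[-t : 1]`, whose form `-tX + Y` does not divide `Q` as `Q(1, t) ≠ 0`.
lemma setOf_linForm_dvd_eq_image_shearChart {a b c d e t : ℝ}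
    (ht : quarticForm a b c d e 1 t ≠ 0) :
    {L : Projectivization ℝ (ℝ × ℝ) | ∃ v : ℝ × ℝ, ∃ hv : v ≠ 0,
      Projectivization.mk ℝ v hv = L ∧ linForm v.1 v.2 ∣ binQuartic a b c d e} =
    shearChart t '' {x | quarticForm a b c d e x (t * x + 1) = 0} := by
  ext L
  constructor
  · rintro ⟨⟨p, q⟩, hpq, rfl, hdvd⟩
    rw [linForm_dvd_binQuartic_iff hpq] at hdvd
    have hy : -p - t * q ≠ 0 := by
      intro hy
      have hq : q ^ 4 * quarticForm a b c d e 1 t = 0 := by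
        rw [← hdvd, ← quarticForm_mul_mul, mul_one, show q * t = -p by linarith]
      obtain rfl : q = 0 := by simpa [ht] using hq
      exact hpq (Prod.ext (show p = 0 by linarith) rfl)
    set y := -p - t * q
    have hq : q = y * (q / y) := by field_simp
    have hp : -p = y * (t * (q / y) + 1) := by field_simp; ring
    refine ⟨q / y, ?_, ((Projectivization.mk_eq_mk_iff' ℝ _ _ _ _).mpr ⟨y, ?_⟩).symm⟩
    · rw [hq, hp, quarticForm_mul_mul] at hdvd
      simpa [hy] using hdvd
    · simp only [Prod.smul_mk, smul_eq_mul, Prod.mk.injEq]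
      constructor <;> linarith
  · rintro ⟨x, hx, rfl⟩
    refine ⟨_, shearChart_ne_zero t x, rfl, ?_⟩
    rwa [linForm_dvd_binQuartic_iff (shearChart_ne_zero t x), neg_neg]

lemma exists_quarticForm_one_ne_zero {a b c d e : ℝ} (hΔ : quarticDisc a b c d e ≠ 0) :
    ∃ t, quarticForm a b c d e 1 t ≠ 0 := by
  by_contra! h
  have h₀ := h 0
  have h₁ := h 1
  have h₂ := h (-1)
  have h₃ := h 2
  have h₄ := h (-2)
  simp only [quarticForm] at h₀ h₁ h₂ h₃ h₄
  obtain ⟨rfl, rfl, rfl, rfl, rfl⟩ : a = 0 ∧ b = 0 ∧ c = 0 ∧ d = 0 ∧ e = 0 := by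
    refine ⟨?_, ?_, ?_, ?_, ?_⟩ <;> linarith
  simp [quarticDisc, Iinv, Jinv] at hΔ

lemma exists_shear_quarticForm (a b c d e t : ℝ) :
    ∃ a' b' c' d' e' : ℝ, a' = quarticForm a b c d e 1 t ∧
      quarticDisc a' b' c' d' e' = quarticDisc a b c d e ∧
      ∀ x y, quarticForm a' b' c' d' e' x y = quarticForm a b c d e x (t * x + y) :=
  ⟨_, b + 2 * c * t + 3 * d * t ^ 2 + 4 * e * t ^ 3, c + 3 * d * t + 6 * e * t ^ 2,
    d + 4 * e * t, e, rfl, by simp only [quarticDisc, Iinv, Jinv, quarticForm]; ring,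
    fun x y => by simp only [quarticForm]; ring⟩

open ComplexConjugate

lemma eq_cons_cons_conj {M : Multiset ℂ} (hM : M.map conj = M) {z : ℂ} (hz : z ∈ M)
    (him : z.im ≠ 0) : ∃ M', M = z ::ₘ conj z ::ₘ M' ∧ M'.map conj = M' := by
  obtain ⟨M₁, rfl⟩ := Multiset.exists_cons_of_mem hz
  have hmem : conj z ∈ M₁ := by
    have : conj z ∈ (z ::ₘ M₁).map conj := Multiset.mem_map_of_mem _ (Multiset.mem_cons_self _ _)
    rw [hM] at this
    exact (Multiset.mem_cons.mp this).resolve_left (mt Complex.conj_eq_iff_im.mp him)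
  obtain ⟨M', rfl⟩ := Multiset.exists_cons_of_mem hmem
  refine ⟨M', rfl, ?_⟩
  rwa [Multiset.map_cons, Multiset.map_cons, Complex.conj_conj, Multiset.cons_swap,
    Multiset.cons_inj_right, Multiset.cons_inj_right] at hM

lemma ofReal_re_of_im_eq_zero {z : ℂ} (h : z.im = 0) : (z.re : ℂ) = z :=
  Complex.conj_eq_iff_re.mp (Complex.conj_eq_iff_im.mpr h)

lemma conj_invariant_card_four_cases {M : Multiset ℂ} (h4 : M.card = 4) (hM : M.map conj = M) :
    (∃ x₁ x₂ x₃ x₄ : ℝ, M = {(x₁ : ℂ), ↑x₂, ↑x₃, ↑x₄}) ∨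
    (∃ z : ℂ, z.im ≠ 0 ∧ ∃ x₃ x₄ : ℝ, M = {z, conj z, ↑x₃, ↑x₄}) ∨
    (∃ z w : ℂ, z.im ≠ 0 ∧ w.im ≠ 0 ∧ M = {z, conj z, w, conj w}) := by
  by_cases hreal : ∀ z ∈ M, z.im = 0
  · obtain ⟨s₁, s₂, s₃, s₄, rfl⟩ := Multiset.card_eq_four.mp h4
    simp only [Multiset.insert_eq_cons, Multiset.mem_cons, Multiset.mem_singleton,
      forall_eq_or_imp, forall_eq] at hreal
    obtain ⟨h₁, h₂, h₃, h₄⟩ := hreal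
    exact Or.inl ⟨s₁.re, s₂.re, s₃.re, s₄.re, by simp only [ofReal_re_of_im_eq_zero, *]⟩
  push Not at hreal
  obtain ⟨z, hz, hzim⟩ := hreal
  obtain ⟨M', rfl, hM'⟩ := eq_cons_cons_conj hM hz hzim
  have h2 : M'.card = 2 := by simpa using h4
  by_cases hreal' : ∀ w ∈ M', w.im = 0
  · obtain ⟨u, v, rfl⟩ := Multiset.card_eq_two.mp h2
    simp only [Multiset.insert_eq_cons, Multiset.mem_cons, Multiset.mem_singleton,
      forall_eq_or_imp, forall_eq] at hreal'
    refine Or.inr (Or.inl ⟨z, hzim, u.re, v.re, ?_⟩)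
    simp only [ofReal_re_of_im_eq_zero, hreal']
    rfl
  push Not at hreal'
  obtain ⟨w, hw, hwim⟩ := hreal'
  obtain ⟨M'', rfl, -⟩ := eq_cons_cons_conj hM' hw hwim
  obtain rfl : M'' = 0 := Multiset.card_eq_zero.mp (by simpa using h2)
  exact Or.inr (Or.inr ⟨z, w, hzim, hwim, rfl⟩)

lemma ofReal_quarticForm (a b c d e x y : ℝ) :
    ((quarticForm a b c d e x y : ℝ) : ℂ) = quarticForm (a : ℂ) b c d e x y := by
  simp [quarticForm]

lemma exists_roots_quarticForm {a : ℝ} (b c d e : ℝ) (ha : a ≠ 0) :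
    ∃ M : Multiset ℂ, M.card = 4 ∧ M.map conj = M ∧
      ∀ z : ℂ, quarticForm (a : ℂ) b c d e z 1 = a * (M.map (z - ·)).prod := by
  set P : Polynomial ℂ := Polynomial.C (a : ℂ) * Polynomial.X ^ 4 +
    Polynomial.C (b : ℂ) * Polynomial.X ^ 3 + Polynomial.C (c : ℂ) * Polynomial.X ^ 2 +
    Polynomial.C (d : ℂ) * Polynomial.X + Polynomial.C (e : ℂ)
  have hdeg : P.natDegree = 4 := by
    unfold P
    compute_degree!
  have hlc : P.leadingCoeff = a := by
    rw [Polynomial.leadingCoeff, hdeg]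
    simp [P]
  have hsplit : P.Splits := IsAlgClosed.splits P
  refine ⟨P.roots, by rw [← hdeg, Polynomial.splits_iff_card_roots.mp hsplit], ?_, fun z => ?_⟩
  · have hconj : P.map conj = P := by simp [P]
    rw [← hsplit.roots_map, hconj]
  · have heval : P.eval z = quarticForm (a : ℂ) b c d e z 1 := by
      simp only [P, quarticForm, Polynomial.eval_add, Polynomial.eval_mul, Polynomial.eval_pow,
        Polynomial.eval_C, Polynomial.eval_X]
      ring
    rw [← heval, hsplit.eval_eq_prod_roots, hlc]

def diffProd {R : Type*} [CommRing R] (s₁ s₂ s₃ s₄ : R) : R :=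
  (s₁ - s₂) * (s₁ - s₃) * (s₁ - s₄) * (s₂ - s₃) * (s₂ - s₄) * (s₃ - s₄)

lemma ofReal_quarticDisc {a b c d e : ℝ} {s₁ s₂ s₃ s₄ : ℂ}
    (hP : ∀ z : ℂ, quarticForm (a : ℂ) b c d e z 1 =
      a * (({s₁, s₂, s₃, s₄} : Multiset ℂ).map (z - ·)).prod) :
    (quarticDisc a b c d e : ℂ) = 27 * a ^ 6 * diffProd s₁ s₂ s₃ s₄ ^ 2 := by
  have hP (z : ℂ) : a * z ^ 4 + b * z ^ 3 + c * z ^ 2 + d * z + e =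
      a * ((z - s₁) * ((z - s₂) * ((z - s₃) * (z - s₄)))) := by
    simpa [quarticForm] using hP z
  -- Vieta's formulas, read off from the factorization at `z = 0, ±1, ±2`
  have he : (e : ℂ) = a * (s₁ * s₂ * s₃ * s₄) := by linear_combination hP 0
  have hc : (c : ℂ) = a * (s₁ * s₂ + s₁ * s₃ + s₁ * s₄ + s₂ * s₃ + s₂ * s₄ + s₃ * s₄) := by
    linear_combination (1 / 2 : ℂ) * hP 1 + (1 / 2 : ℂ) * hP (-1) - hP 0
  have hb : (b : ℂ) = -a * (s₁ + s₂ + s₃ + s₄) := by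
    linear_combination (1 / 12 : ℂ) * hP 2 - (1 / 6 : ℂ) * hP 1 + (1 / 6 : ℂ) * hP (-1) -
      (1 / 12 : ℂ) * hP (-2)
  have hd : (d : ℂ) = -a * (s₁ * s₂ * s₃ + s₁ * s₂ * s₄ + s₁ * s₃ * s₄ + s₂ * s₃ * s₄) := by
    linear_combination (-1 / 12 : ℂ) * hP 2 + (2 / 3 : ℂ) * hP 1 - (2 / 3 : ℂ) * hP (-1) +
      (1 / 12 : ℂ) * hP (-2)
  simp only [quarticDisc, Iinv, Jinv, diffProd]
  push_cast
  rw [hb, hc, hd, he]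
  ring

lemma quarticForm_eq_zero_iff {a b c d e : ℝ} (ha : a ≠ 0) {M : Multiset ℂ}
    (hP : ∀ z : ℂ, quarticForm (a : ℂ) b c d e z 1 = a * (M.map (z - ·)).prod) (x : ℝ) :
    quarticForm a b c d e x 1 = 0 ↔ (x : ℂ) ∈ M := by
  rw [← Complex.ofReal_eq_zero, ofReal_quarticForm, Complex.ofReal_one, hP]
  simp [ha, Multiset.prod_eq_zero_iff, sub_eq_zero]

lemma pos_of_ofReal_eq_mul_sq {Δ a : ℝ} {V : ℂ} (ha : a ≠ 0) (hV : conj V = V) (hV₀ : V ≠ 0)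
    (h : (Δ : ℂ) = 27 * a ^ 6 * V ^ 2) : 0 < Δ := by
  obtain ⟨r, rfl⟩ := Complex.conj_eq_iff_real.mp hV
  have hr : r ≠ 0 := by exact_mod_cast hV₀
  have hΔ : Δ = 27 * a ^ 6 * r ^ 2 := by exact_mod_cast h
  rw [hΔ]
  positivity

lemma neg_of_ofReal_eq_mul_sq {Δ a : ℝ} {V : ℂ} (ha : a ≠ 0) (hV : conj V = -V) (hV₀ : V ≠ 0)
    (h : (Δ : ℂ) = 27 * a ^ 6 * V ^ 2) : Δ < 0 := by
  have hre : V.re = 0 := by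
    have := congrArg Complex.re hV
    simp only [Complex.conj_re, Complex.neg_re] at this
    linarith
  have hV : V = V.im * Complex.I := Complex.ext (by simp [hre]) (by simp)
  have him : V.im ≠ 0 := fun h0 => hV₀ (by rw [hV, h0]; simp)
  have hΔ : Δ = -(27 * a ^ 6 * V.im ^ 2) := by
    rw [hV, mul_pow, Complex.I_sq] at h
    exact_mod_cast (by rw [h]; push_cast; ring : (Δ : ℂ) = ((-(27 * a ^ 6 * V.im ^ 2) : ℝ) : ℂ))
  rw [hΔ]
  have : 0 < 27 * a ^ 6 * V.im ^ 2 := by positivity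
  linarith

lemma diffProd_ne_zero {a b c d e : ℝ} (hΔ : quarticDisc a b c d e ≠ 0) {s₁ s₂ s₃ s₄ : ℂ}
    (h : (quarticDisc a b c d e : ℂ) = 27 * a ^ 6 * diffProd s₁ s₂ s₃ s₄ ^ 2) :
    diffProd s₁ s₂ s₃ s₄ ≠ 0 := fun h₀ =>
  hΔ (Complex.ofReal_eq_zero.mp (h.trans (by rw [h₀]; ring)))

lemma ofReal_ne_of_im_ne_zero {z : ℂ} (hz : z.im ≠ 0) (x : ℝ) : (x : ℂ) ≠ z ∧ (x : ℂ) ≠ conj z :=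
  ⟨fun h => hz (by simp [← h]), fun h => hz (by simpa using congrArg Complex.im h.symm)⟩

lemma quarticDisc_pos_of_roots_real {a b c d e : ℝ} (ha : a ≠ 0) (hΔ : quarticDisc a b c d e ≠ 0)
    {x₁ x₂ x₃ x₄ : ℝ} (hP : ∀ z : ℂ, quarticForm (a : ℂ) b c d e z 1 =
      a * (({(x₁ : ℂ), ↑x₂, ↑x₃, ↑x₄} : Multiset ℂ).map (z - ·)).prod) :
    0 < quarticDisc a b c d e ∧ {x | quarticForm a b c d e x 1 = 0}.ncard = 4 := by
  have hV := ofReal_quarticDisc hP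
  have hV₀ := diffProd_ne_zero hΔ hV
  refine ⟨pos_of_ofReal_eq_mul_sq ha (by simp [diffProd]) hV₀ hV, ?_⟩
  have hroots : {x | quarticForm a b c d e x 1 = 0} = {x₁, x₂, x₃, x₄} := by
    ext x
    simp [quarticForm_eq_zero_iff ha hP]
  simp only [diffProd, ne_eq, mul_eq_zero, sub_eq_zero, Complex.ofReal_inj, not_or] at hV₀
  rw [hroots, Set.ncard_insert_of_notMem (by simp [*]), Set.ncard_insert_of_notMem (by simp [*]),
    Set.ncard_pair (by simp [*])]

lemma quarticDisc_neg_of_roots_one_conj_pair {a b c d e : ℝ} (ha : a ≠ 0)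
    (hΔ : quarticDisc a b c d e ≠ 0) {z : ℂ} (hz : z.im ≠ 0) {x₃ x₄ : ℝ}
    (hP : ∀ w : ℂ, quarticForm (a : ℂ) b c d e w 1 =
      a * (({z, conj z, ↑x₃, ↑x₄} : Multiset ℂ).map (w - ·)).prod) :
    quarticDisc a b c d e < 0 ∧ {x | quarticForm a b c d e x 1 = 0}.ncard = 2 := by
  have hV := ofReal_quarticDisc hP
  have hV₀ := diffProd_ne_zero hΔ hV
  refine ⟨neg_of_ofReal_eq_mul_sq ha (by simp [diffProd]; ring) hV₀ hV, ?_⟩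
  have hroots : {x | quarticForm a b c d e x 1 = 0} = {x₃, x₄} := by
    ext x
    simp [quarticForm_eq_zero_iff ha hP, ofReal_ne_of_im_ne_zero hz x]
  simp only [diffProd, ne_eq, mul_eq_zero, sub_eq_zero, Complex.ofReal_inj, not_or] at hV₀
  rw [hroots, Set.ncard_pair hV₀.2]

lemma quarticDisc_pos_of_roots_two_conj_pairs {a b c d e : ℝ} (ha : a ≠ 0)
    (hΔ : quarticDisc a b c d e ≠ 0) {z w : ℂ} (hz : z.im ≠ 0) (hw : w.im ≠ 0)
    (hP : ∀ u : ℂ, quarticForm (a : ℂ) b c d e u 1 =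
      a * (({z, conj z, w, conj w} : Multiset ℂ).map (u - ·)).prod) :
    0 < quarticDisc a b c d e ∧ {x | quarticForm a b c d e x 1 = 0}.ncard = 0 := by
  have hV := ofReal_quarticDisc hP
  refine ⟨pos_of_ofReal_eq_mul_sq ha (by simp [diffProd]; ring) (diffProd_ne_zero hΔ hV) hV, ?_⟩
  have hroots : {x | quarticForm a b c d e x 1 = 0} = ∅ := by
    ext x
    simp [quarticForm_eq_zero_iff ha hP, ofReal_ne_of_im_ne_zero hz x, ofReal_ne_of_im_ne_zero hw x]
  rw [hroots, Set.ncard_empty]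

lemma quarticDisc_sign_ncard_roots {a b c d e : ℝ} (ha : a ≠ 0) (hΔ : quarticDisc a b c d e ≠ 0) :
    (0 < quarticDisc a b c d e ∧ ({x | quarticForm a b c d e x 1 = 0}.ncard = 0 ∨
      {x | quarticForm a b c d e x 1 = 0}.ncard = 4)) ∨
    (quarticDisc a b c d e < 0 ∧ {x | quarticForm a b c d e x 1 = 0}.ncard = 2) := by
  obtain ⟨M, h4, hM, hP⟩ := exists_roots_quarticForm b c d e ha
  rcases conj_invariant_card_four_cases h4 hM with
    ⟨x₁, x₂, x₃, x₄, rfl⟩ | ⟨z, hz, x₃, x₄, rfl⟩ | ⟨z, w, hz, hw, rfl⟩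
  · exact Or.inl ((quarticDisc_pos_of_roots_real ha hΔ hP).imp_right Or.inr)
  · exact Or.inr (quarticDisc_neg_of_roots_one_conj_pair ha hΔ hz hP)
  · exact Or.inl ((quarticDisc_pos_of_roots_two_conj_pairs ha hΔ hz hw hP).imp_right Or.inl)

theorem discriminant_sign_counts_real_factors_general
    (a b c d e : ℝ)
    (hΔ : 4 * Iinv a b c d e ^ 3 - Jinv a b c d e ^ 2 ≠ 0)
    (N : ℕ)
    (hN : N = Set.ncard {L : Projectivization ℝ (ℝ × ℝ) |
      ∃ v : ℝ × ℝ, ∃ hv : v ≠ 0, Projectivization.mk ℝ v hv = L ∧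
        linForm v.1 v.2 ∣ binQuartic a b c d e}) :
    (0 < 4 * Iinv a b c d e ^ 3 - Jinv a b c d e ^ 2 ↔ N = 0 ∨ N = 4) ∧
    (4 * Iinv a b c d e ^ 3 - Jinv a b c d e ^ 2 < 0 ↔ N = 2) := by
  change quarticDisc a b c d e ≠ 0 at hΔ
  change (0 < quarticDisc a b c d e ↔ _) ∧ (quarticDisc a b c d e < 0 ↔ _)
  obtain ⟨t, ht⟩ := exists_quarticForm_one_ne_zero hΔ
  obtain ⟨a', b', c', d', e', ha', hdisc, hshear⟩ := exists_shear_quarticForm a b c d e t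
  have hNroots : N = {x | quarticForm a' b' c' d' e' x 1 = 0}.ncard := by
    rw [hN, setOf_linForm_dvd_eq_image_shearChart ht,
      Set.ncard_image_of_injective _ (shearChart_injective t)]
    simp only [hshear]
  rw [← hdisc] at hΔ ⊢
  rcases quarticDisc_sign_ncard_roots (ha' ▸ ht) hΔ with ⟨hpos, hcount⟩ | ⟨hneg, hcount⟩ <;>
    rw [← hNroots] at hcount
  · exact ⟨iff_of_true hpos hcount, iff_of_false hpos.not_gt (by omega)⟩
  · exact ⟨iff_of_false hneg.not_gt (by omega), iff_of_true hneg hcount⟩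

/-- For a nonzero real binary quartic without repeated complex linear factors
(`Δ ≠ 0`): `Δ > 0` iff the number of pairwise non-proportional real linear
factors is `0` or `4`, and `Δ < 0` iff that number is exactly `2`. -/
theorem discriminant_sign_counts_real_factors
    (a b c d e : ℝ) (hQ : binQuartic a b c d e ≠ 0)
    (hΔ : 4 * Iinv a b c d e ^ 3 - Jinv a b c d e ^ 2 ≠ 0)
    (N : ℕ)
    (hN : N = Set.ncard {L : Projectivization ℝ (ℝ × ℝ) |
      ∃ v : ℝ × ℝ, ∃ hv : v ≠ 0, Projectivization.mk ℝ v hv = L ∧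
        linForm v.1 v.2 ∣ binQuartic a b c d e}) :
    (0 < 4 * Iinv a b c d e ^ 3 - Jinv a b c d e ^ 2 ↔ N = 0 ∨ N = 4) ∧
    (4 * Iinv a b c d e ^ 3 - Jinv a b c d e ^ 2 < 0 ↔ N = 2) :=
  discriminant_sign_counts_real_factors_general a b c d e hΔ N hN
end

section
/- For a nonzero real binary quartic Q, the following are equivalent: (i) the covariant L_Q := I(Q)·H_Q − 6·J(Q)·Q vanishes identically, H_Q is not identically zero, and (I(Q), J(Q)) ≠ (0,0); (ii) Q has exactly two non-proportional linear factors over ℂ, each of multiplicity two; equivalently Q = c·R² for some c ≠ 0 and a real quadratic form R with nonzero discriminant. Moreover, in this case the two double factors are a complex-conjugate pair if and only if H_Q(v) ≥ 0 for all v ∈ ℝ², and both are real if and only if H_Q(v) ≤ 0 for all v ∈ ℝ². -/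
/-- The real binary quartic `Q(X,Y) = aX⁴ + bX³Y + cX²Y² + dXY³ + eY⁴` as a
function of two real variables. -/
def Qf (a b c d e : ℝ) : ℝ → ℝ → ℝ := fun X Y =>
  a * X ^ 4 + b * X ^ 3 * Y + c * X ^ 2 * Y ^ 2 + d * X * Y ^ 3 + e * Y ^ 4

/-- The Hessian covariant `H_Q = Q_XX·Q_YY − (Q_XY)²` of the binary quartic. -/
noncomputable def HessQ (a b c d e : ℝ) (X Y : ℝ) : ℝ :=
  deriv (fun x => deriv (fun x' => Qf a b c d e x' Y) x) X *
    deriv (fun y => deriv (fun y' => Qf a b c d e X y') y) Y -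
  (deriv (fun y => deriv (fun x => Qf a b c d e x y) X) Y) ^ 2

/-- The covariant `L_Q = I(Q)·H_Q − 6·J(Q)·Q`. -/
noncomputable def LQ (a b c d e : ℝ) (X Y : ℝ) : ℝ :=
  Iinv a b c d e * HessQ a b c d e X Y - 6 * Jinv a b c d e * Qf a b c d e X Y

/-!
Writing the Hessian as a quartic, `L_Q = 0` with `I ≠ 0` says `H_Q = (6J/I)·Q` (and `I = 0` is
impossible: then `J ≠ 0` and `L_Q = -6J·Q` forces `Q = 0`). Comparing coefficients, a quartic
proportional to its Hessian is `c·R²`; for `a ≠ 0` explicitly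
`64a³·Q = (8a²X² + 4abXY + (4ac - b²)Y²)²`. Conversely, for `Q = c·R²` with `D = disc R` one
computes `H_Q = -12c²D·R²`, `I = c²D²` and `J = -2c³D³`, so `L_Q = 0`, `I ≠ 0` exactly when
`D ≠ 0`, and `H_Q` has the sign opposite to `D`.
-/

lemma Qf_eq_Qf_iff {a b c d e a' b' c' d' e' : ℝ} :
    Qf a b c d e = Qf a' b' c' d' e' ↔ a = a' ∧ b = b' ∧ c = c' ∧ d = d' ∧ e = e' := by
  refine ⟨fun h => ?_, by rintro ⟨rfl, rfl, rfl, rfl, rfl⟩; rfl⟩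
  have h10 := congrFun₂ h 1 0
  have h01 := congrFun₂ h 0 1
  have h11 := congrFun₂ h 1 1
  have h1m := congrFun₂ h 1 (-1)
  have h21 := congrFun₂ h 2 1
  norm_num [Qf] at h10 h01 h11 h1m h21
  exact ⟨by linarith, by linarith, by linarith, by linarith, by linarith⟩

lemma mul_Qf (μ a b c d e X Y : ℝ) :
    μ * Qf a b c d e X Y = Qf (μ * a) (μ * b) (μ * c) (μ * d) (μ * e) X Y := by
  simp only [Qf]
  ring

lemma mul_sq_quadratic_eq_Qf (c0 A B C X Y : ℝ) :
    c0 * (A * X ^ 2 + B * X * Y + C * Y ^ 2) ^ 2 =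
      Qf (c0 * A ^ 2) (2 * c0 * A * B) (c0 * (B ^ 2 + 2 * A * C)) (2 * c0 * B * C) (c0 * C ^ 2)
        X Y := by
  simp only [Qf]
  ring

lemma exists_quadratic_ne_zero {A B C : ℝ} (h : B ^ 2 - 4 * A * C ≠ 0) :
    ∃ X Y : ℝ, A * X ^ 2 + B * X * Y + C * Y ^ 2 ≠ 0 := by
  contrapose! h
  have h10 := h 1 0
  have h01 := h 0 1
  have h11 := h 1 1
  norm_num at h10 h01 h11
  simp [h10, h01, show B = 0 by linarith]

lemma forall_mul_sq_nonneg_iff {α β : Type*} {k : ℝ} {f : α → β → ℝ}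
    (hf : ∃ x y, f x y ≠ 0) : (∀ x y, 0 ≤ k * f x y ^ 2) ↔ 0 ≤ k := by
  obtain ⟨x, y, hxy⟩ := hf
  exact ⟨fun h => nonneg_of_mul_nonneg_left (h x y) (by positivity),
    fun hk _ _ => by positivity⟩

lemma forall_mul_sq_nonpos_iff {α β : Type*} {k : ℝ} {f : α → β → ℝ}
    (hf : ∃ x y, f x y ≠ 0) : (∀ x y, k * f x y ^ 2 ≤ 0) ↔ k ≤ 0 := by
  simpa only [neg_mul, neg_nonneg] using forall_mul_sq_nonneg_iff (k := -k) hf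

lemma HessQ_eq (a b c d e X Y : ℝ) :
    HessQ a b c d e X Y =
      Qf (24 * a * c - 9 * b ^ 2) (72 * a * d - 12 * b * c) (144 * a * e + 18 * b * d - 12 * c ^ 2)
        (72 * b * e - 12 * c * d) (24 * c * e - 9 * d ^ 2) X Y := by
  simp (disch := fun_prop) only [HessQ, Qf, deriv_fun_add, deriv_fun_mul, deriv_const',
    deriv_fun_pow, deriv_id'', deriv_const_mul_id']
  ring

section SquareOfQuadratic

variable {a b c d e c0 A B C : ℝ}

lemma coeffs_eq_of_Qf_eq_mul_sq
    (hq : ∀ X Y, Qf a b c d e X Y = c0 * (A * X ^ 2 + B * X * Y + C * Y ^ 2) ^ 2) :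
    a = c0 * A ^ 2 ∧ b = 2 * c0 * A * B ∧ c = c0 * (B ^ 2 + 2 * A * C) ∧ d = 2 * c0 * B * C ∧
      e = c0 * C ^ 2 :=
  Qf_eq_Qf_iff.mp <| funext₂ fun X Y => (hq X Y).trans (mul_sq_quadratic_eq_Qf ..)

lemma HessQ_of_Qf_eq_mul_sq
    (hq : ∀ X Y, Qf a b c d e X Y = c0 * (A * X ^ 2 + B * X * Y + C * Y ^ 2) ^ 2) (X Y : ℝ) :
    HessQ a b c d e X Y =
      -12 * c0 ^ 2 * (B ^ 2 - 4 * A * C) * (A * X ^ 2 + B * X * Y + C * Y ^ 2) ^ 2 := by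
  obtain ⟨rfl, rfl, rfl, rfl, rfl⟩ := coeffs_eq_of_Qf_eq_mul_sq hq
  rw [HessQ_eq, Qf]
  ring

lemma Iinv_of_Qf_eq_mul_sq
    (hq : ∀ X Y, Qf a b c d e X Y = c0 * (A * X ^ 2 + B * X * Y + C * Y ^ 2) ^ 2) :
    Iinv a b c d e = c0 ^ 2 * (B ^ 2 - 4 * A * C) ^ 2 := by
  obtain ⟨rfl, rfl, rfl, rfl, rfl⟩ := coeffs_eq_of_Qf_eq_mul_sq hq
  rw [Iinv]
  ring

lemma Jinv_of_Qf_eq_mul_sq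
    (hq : ∀ X Y, Qf a b c d e X Y = c0 * (A * X ^ 2 + B * X * Y + C * Y ^ 2) ^ 2) :
    Jinv a b c d e = -2 * c0 ^ 3 * (B ^ 2 - 4 * A * C) ^ 3 := by
  obtain ⟨rfl, rfl, rfl, rfl, rfl⟩ := coeffs_eq_of_Qf_eq_mul_sq hq
  rw [Jinv]
  ring

lemma LQ_of_Qf_eq_mul_sq
    (hq : ∀ X Y, Qf a b c d e X Y = c0 * (A * X ^ 2 + B * X * Y + C * Y ^ 2) ^ 2) (X Y : ℝ) :
    LQ a b c d e X Y = 0 := by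
  rw [LQ, Iinv_of_Qf_eq_mul_sq hq, HessQ_of_Qf_eq_mul_sq hq, Jinv_of_Qf_eq_mul_sq hq, hq]
  ring

lemma discr_neg_iff_forall_HessQ_nonneg (hc0 : c0 ≠ 0) (hD : B ^ 2 - 4 * A * C ≠ 0)
    (hq : ∀ X Y, Qf a b c d e X Y = c0 * (A * X ^ 2 + B * X * Y + C * Y ^ 2) ^ 2) :
    B ^ 2 - 4 * A * C < 0 ↔ ∀ X Y, 0 ≤ HessQ a b c d e X Y := by
  have hc : 0 < c0 ^ 2 := by positivity
  simp only [HessQ_of_Qf_eq_mul_sq hq, forall_mul_sq_nonneg_iff (exists_quadratic_ne_zero hD)]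
  exact ⟨fun h => by nlinarith, fun h => hD.lt_of_le (by nlinarith)⟩

lemma discr_pos_iff_forall_HessQ_nonpos (hc0 : c0 ≠ 0) (hD : B ^ 2 - 4 * A * C ≠ 0)
    (hq : ∀ X Y, Qf a b c d e X Y = c0 * (A * X ^ 2 + B * X * Y + C * Y ^ 2) ^ 2) :
    0 < B ^ 2 - 4 * A * C ↔ ∀ X Y, HessQ a b c d e X Y ≤ 0 := by
  have hc : 0 < c0 ^ 2 := by positivity
  simp only [HessQ_of_Qf_eq_mul_sq hq, forall_mul_sq_nonpos_iff (exists_quadratic_ne_zero hD)]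
  exact ⟨fun h => by nlinarith, fun h => hD.symm.lt_of_le (by nlinarith)⟩

end SquareOfQuadratic

lemma exists_Qf_eq_mul_sq_of_HessQ_eq_mul {a b c d e μ : ℝ}
    (h : ∀ X Y, HessQ a b c d e X Y = μ * Qf a b c d e X Y) :
    ∃ c0 A B C : ℝ, ∀ X Y, Qf a b c d e X Y = c0 * (A * X ^ 2 + B * X * Y + C * Y ^ 2) ^ 2 := by
  obtain ⟨h1, h2, h3, h4, h5⟩ := Qf_eq_Qf_iff.mp <| funext₂ fun X Y =>
    (HessQ_eq a b c d e X Y).symm.trans ((h X Y).trans (mul_Qf ..))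
  by_cases ha : a = 0
  · subst ha
    obtain rfl : b = 0 := pow_eq_zero_iff two_ne_zero |>.mp (by linarith)
    by_cases hc : c = 0
    · subst hc
      obtain rfl : d = 0 :=
        pow_eq_zero_iff three_ne_zero |>.mp (by linear_combination (-1 / 9 : ℝ) * (d * h5 - e * h4))
      exact ⟨e, 0, 0, 1, fun X Y => by simp only [Qf]; ring⟩
    · have hd : d ^ 2 = 4 * c * e := mul_left_cancel₀ hc (by linear_combination (e * h3 - c * h5) / 9)
      refine ⟨(4 * c)⁻¹, 0, 2 * c, d, fun X Y => ?_⟩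
      simp only [Qf]
      field_simp
      linear_combination -Y ^ 4 * hd
  · have hd : 8 * a ^ 2 * d = b * (4 * a * c - b ^ 2) := by linear_combination (a * h2 - b * h1) / 9
    have he : 64 * a ^ 3 * e = (4 * a * c - b ^ 2) ^ 2 := by
      linear_combination 4 * a * (a * h3 - c * h1) / 9 - b * hd
    refine ⟨(64 * a ^ 3)⁻¹, 8 * a ^ 2, 4 * a * b, 4 * a * c - b ^ 2, fun X Y => ?_⟩
    simp only [Qf]
    field_simp
    linear_combination 8 * a * X * Y ^ 3 * hd + Y ^ 4 * he

/-- For a nonzero real binary quartic `Q`: the covariant `L_Q` vanishes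
identically with `H_Q ≢ 0` and `(I,J) ≠ (0,0)` iff `Q = c·R²` for a real
quadratic form `R` with nonzero discriminant (two non-proportional double
linear factors). Moreover, in this case the double factors are a
complex-conjugate pair iff `H_Q ≥ 0` everywhere, and both real iff `H_Q ≤ 0`
everywhere. -/
theorem L_zero_iff_square_of_quadratic
    (a b c d e : ℝ) (hQ : ¬(a = 0 ∧ b = 0 ∧ c = 0 ∧ d = 0 ∧ e = 0)) :
    (((∀ X Y : ℝ, LQ a b c d e X Y = 0) ∧
        (¬ ∀ X Y : ℝ, HessQ a b c d e X Y = 0) ∧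
        ¬(Iinv a b c d e = 0 ∧ Jinv a b c d e = 0)) ↔
      (∃ c0 A B C : ℝ, c0 ≠ 0 ∧ B ^ 2 - 4 * A * C ≠ 0 ∧
        ∀ X Y : ℝ, Qf a b c d e X Y =
          c0 * (A * X ^ 2 + B * X * Y + C * Y ^ 2) ^ 2)) ∧
    (∀ c0 A B C : ℝ, c0 ≠ 0 → B ^ 2 - 4 * A * C ≠ 0 →
      (∀ X Y : ℝ, Qf a b c d e X Y =
        c0 * (A * X ^ 2 + B * X * Y + C * Y ^ 2) ^ 2) →
      ((B ^ 2 - 4 * A * C < 0 ↔ ∀ X Y : ℝ, 0 ≤ HessQ a b c d e X Y) ∧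
       (0 < B ^ 2 - 4 * A * C ↔ ∀ X Y : ℝ, HessQ a b c d e X Y ≤ 0))) := by
  refine ⟨⟨?_, ?_⟩, ?_⟩
  · rintro ⟨hL, -, hIJ⟩
    simp only [LQ, sub_eq_zero] at hL
    have hI : Iinv a b c d e ≠ 0 := by
      refine fun hI => hQ (Qf_eq_Qf_iff.mp (funext₂ fun X Y => ?_))
      have hJ : Jinv a b c d e ≠ 0 := fun hJ => hIJ ⟨hI, hJ⟩
      simpa [hI, hJ, Qf] using hL X Y
    have hHQ : ∀ X Y, HessQ a b c d e X Y =
        6 * Jinv a b c d e / Iinv a b c d e * Qf a b c d e X Y := fun X Y => by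
      rw [div_mul_eq_mul_div, eq_div_iff hI, mul_comm, hL, mul_assoc]
    obtain ⟨c0, A, B, C, hq⟩ := exists_Qf_eq_mul_sq_of_HessQ_eq_mul hHQ
    rw [Iinv_of_Qf_eq_mul_sq hq, mul_ne_zero_iff, pow_ne_zero_iff two_ne_zero,
      pow_ne_zero_iff two_ne_zero] at hI
    exact ⟨c0, A, B, C, hI.1, hI.2, hq⟩
  · rintro ⟨c0, A, B, C, hc0, hD, hq⟩
    obtain ⟨X, Y, hR⟩ := exists_quadratic_ne_zero hD
    refine ⟨LQ_of_Qf_eq_mul_sq hq, fun hH => ?_, fun hIJ => ?_⟩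
    · simpa [HessQ_of_Qf_eq_mul_sq hq, hc0, hD, hR] using hH X Y
    · simpa [Iinv_of_Qf_eq_mul_sq hq, hc0, hD] using hIJ.1
  · exact fun c0 A B C hc0 hD hq => ⟨discr_neg_iff_forall_HessQ_nonneg hc0 hD hq,
      discr_pos_iff_forall_HessQ_nonpos hc0 hD hq⟩
end
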